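/- arXiv:2103.02659 — 2 statements merged into one kernel-verified Lean document; each statement's English description precedes it below -/
import Mathlib

section
/- Let (Z_t), (β_t), (ξ_t), (ζ_t) be sequences of nonnegative integrable random variables adapted to an increasing filtration (A_t) satisfying E(Z_{t+1} | A_t) ≤ (1 + β_t) Z_t + ξ_t − ζ_t for all t ≥ 1. If Σ_t β_t < ∞ and Σ_t ξ_t < ∞ almost surely, then lim_{t→∞} Z_t exists and Σ_t ζ_t < ∞ almost surely. -/
open MeasureTheory Filter

/-- Robbins–Siegmund almost supermartingale convergence theorem. -/
theorem robbins_siegmund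
    {Ω : Type*} {m : MeasurableSpace Ω} {μ : Measure Ω} [IsProbabilityMeasure μ]
    (𝒜 : ℕ → MeasurableSpace Ω) (hmono : Monotone 𝒜) (hle : ∀ t, 𝒜 t ≤ m)
    (Z β ξ ζ : ℕ → Ω → ℝ)
    (hZint : ∀ t, Integrable (Z t) μ) (hβint : ∀ t, Integrable (β t) μ)
    (hξint : ∀ t, Integrable (ξ t) μ) (hζint : ∀ t, Integrable (ζ t) μ)
    (hZnn : ∀ t ω, 0 ≤ Z t ω) (hβnn : ∀ t ω, 0 ≤ β t ω)
    (hξnn : ∀ t ω, 0 ≤ ξ t ω) (hζnn : ∀ t ω, 0 ≤ ζ t ω)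
    (hZad : ∀ t, Measurable[𝒜 t] (Z t)) (hβad : ∀ t, Measurable[𝒜 t] (β t))
    (hξad : ∀ t, Measurable[𝒜 t] (ξ t)) (hζad : ∀ t, Measurable[𝒜 t] (ζ t))
    (hrec : ∀ t, ∀ᵐ ω ∂μ,
      (μ[Z (t + 1) | 𝒜 t]) ω ≤ (1 + β t ω) * Z t ω + ξ t ω - ζ t ω)
    (hβsum : ∀ᵐ ω ∂μ, Summable fun t => β t ω)
    (hξsum : ∀ᵐ ω ∂μ, Summable fun t => ξ t ω) :
    ∀ᵐ ω ∂μ, (∃ L : ℝ, Tendsto (fun t => Z t ω) atTop (nhds L)) ∧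
      Summable (fun t => ζ t ω) := by
  classical
  set ℱ : Filtration ℕ m := ⟨𝒜, hmono, hle⟩ with hℱdef
  -- the compensating product process
  set P : ℕ → Ω → ℝ := fun t ω => ∏ s ∈ Finset.range t, (1 + β s ω) with hPdef
  have hPsucc : ∀ t ω, P (t+1) ω = P t ω * (1 + β t ω) := fun t ω =>
    Finset.prod_range_succ _ _
  have hPzero : ∀ ω, P 0 ω = 1 := fun ω => Finset.prod_range_zero _
  have hP1 : ∀ t ω, (1:ℝ) ≤ P t ω := by
    intro t ω
    induction t with
    | zero => rw [hPzero]
    | succ t ih => rw [hPsucc]; nlinarith [hβnn t ω]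
  have hPpos : ∀ t ω, (0:ℝ) < P t ω := fun t ω => lt_of_lt_of_le one_pos (hP1 t ω)
  have hPmono : ∀ ω, Monotone fun t => P t ω := by
    intro ω
    refine monotone_nat_of_le_succ (fun t => ?_)
    have h := hPsucc t ω
    have h1 := hPpos t ω
    have h2 := hβnn t ω
    show P t ω ≤ P (t+1) ω
    nlinarith
  have hPmeas : ∀ t u : ℕ, t ≤ u + 1 → Measurable[𝒜 u] (P t) := by
    intro t u htu
    apply Finset.measurable_prod
    intro i hi
    have hiu : i ≤ u := Nat.lt_succ_iff.mp (lt_of_lt_of_le (Finset.mem_range.mp hi) htu)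
    exact ((hβad i).mono (hmono hiu) le_rfl).const_add 1
  have hinvnn : ∀ t ω, (0:ℝ) ≤ (P t ω)⁻¹ := fun t ω => inv_nonneg.2 (hPpos t ω).le
  have hinvle : ∀ t ω, (P t ω)⁻¹ ≤ 1 := fun t ω => inv_le_one_of_one_le₀ (hP1 t ω)
  -- normalized processes
  set Z' : ℕ → Ω → ℝ := fun t ω => (P t ω)⁻¹ * Z t ω with hZ'def
  set ξ' : ℕ → Ω → ℝ := fun t ω => (P (t+1) ω)⁻¹ * ξ t ω with hξ'def
  set ζ' : ℕ → Ω → ℝ := fun t ω => (P (t+1) ω)⁻¹ * ζ t ω with hζ'def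
  have hmP : ∀ t, AEStronglyMeasurable (fun ω => (P t ω)⁻¹) μ := fun t =>
    (((hPmeas t t (Nat.le_succ t)).mono (hle t) le_rfl).inv).aestronglyMeasurable
  have hinvbdd : ∀ t, ∃ C, ∀ ω, ‖(P t ω)⁻¹‖ ≤ C := fun t =>
    ⟨1, fun ω => by rw [Real.norm_eq_abs, abs_of_nonneg (hinvnn t ω)]; exact hinvle t ω⟩
  have hZ'int : ∀ t, Integrable (Z' t) μ := fun t => (hZint t).bdd_mul (hmP t) (ae_of_all μ (hinvbdd t).choose_spec)
  have hξ'int : ∀ t, Integrable (ξ' t) μ := fun t => (hξint t).bdd_mul (hmP (t+1)) (ae_of_all μ (hinvbdd (t+1)).choose_spec)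
  have hζ'int : ∀ t, Integrable (ζ' t) μ := fun t => (hζint t).bdd_mul (hmP (t+1)) (ae_of_all μ (hinvbdd (t+1)).choose_spec)
  have hZ'nn : ∀ t ω, 0 ≤ Z' t ω := fun t ω => mul_nonneg (hinvnn t ω) (hZnn t ω)
  have hξ'nn : ∀ t ω, 0 ≤ ξ' t ω := fun t ω => mul_nonneg (hinvnn (t+1) ω) (hξnn t ω)
  have hζ'nn : ∀ t ω, 0 ≤ ζ' t ω := fun t ω => mul_nonneg (hinvnn (t+1) ω) (hζnn t ω)
  have hZ'ad : ∀ t, Measurable[𝒜 t] (Z' t) := fun t =>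
    ((hPmeas t t (Nat.le_succ t)).inv).mul (hZad t)
  have hξ'ad : ∀ t, Measurable[𝒜 t] (ξ' t) := fun t =>
    ((hPmeas (t+1) t le_rfl).inv).mul (hξad t)
  have hζ'ad : ∀ t, Measurable[𝒜 t] (ζ' t) := fun t =>
    ((hPmeas (t+1) t le_rfl).inv).mul (hζad t)
  -- normalized recursion
  have hrec' : ∀ t, ∀ᵐ ω ∂μ, (μ[Z' (t+1) | 𝒜 t]) ω ≤ Z' t ω + ξ' t ω - ζ' t ω := by
    intro t
    have hsm : StronglyMeasurable[𝒜 t] fun ω => (P (t+1) ω)⁻¹ :=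
      ((hPmeas (t+1) t le_rfl).inv).stronglyMeasurable
    have hpull : μ[Z' (t+1) | 𝒜 t] =ᵐ[μ]
        fun ω => (P (t+1) ω)⁻¹ * (μ[Z (t+1) | 𝒜 t]) ω := by
      have h := condExp_mul_of_stronglyMeasurable_left (m := 𝒜 t) (μ := μ) hsm
        (by exact hZ'int (t+1)) (hZint (t+1))
      exact h
    filter_upwards [hpull, hrec t] with ω h1 h2
    rw [h1]
    have hinv : (0:ℝ) ≤ (P (t+1) ω)⁻¹ := hinvnn (t+1) ω
    have h3 : (P (t+1) ω)⁻¹ * (μ[Z (t+1)|𝒜 t]) ω ≤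
        (P (t+1) ω)⁻¹ * ((1 + β t ω) * Z t ω + ξ t ω - ζ t ω) :=
      mul_le_mul_of_nonneg_left h2 hinv
    refine h3.trans_eq ?_
    have hβpos : (0:ℝ) < 1 + β t ω := by linarith [hβnn t ω]
    have hP0 : P t ω ≠ 0 := (hPpos t ω).ne'
    have hP0' : P (t+1) ω ≠ 0 := (hPpos (t+1) ω).ne'
    show (P (t+1) ω)⁻¹ * ((1 + β t ω) * Z t ω + ξ t ω - ζ t ω) =
      (P t ω)⁻¹ * Z t ω + (P (t+1) ω)⁻¹ * ξ t ω - (P (t+1) ω)⁻¹ * ζ t ω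
    rw [hPsucc t ω] at hP0' ⊢
    field_simp
  -- the key convergence statement for the truncated process
  have key : ∀ a : ℕ, ∀ᵐ ω ∂μ,
      (∀ t, ∑ u ∈ Finset.range (t+1), ξ' u ω ≤ (a:ℝ)) →
      ((∃ L, Tendsto (fun t => Z' t ω) atTop (nhds L)) ∧ Summable fun t => ζ' t ω) := by
    intro a
    set e : ℕ → Ω → ℝ := fun s ω =>
      if (∑ u ∈ Finset.range (s+1), ξ' u ω) ≤ (a:ℝ) then 1 else 0 with hedef
    set D : ℕ → Ω → ℝ := fun s ω => Z' (s+1) ω - Z' s ω - ξ' s ω + ζ' s ω with hDdef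
    set W : ℕ → Ω → ℝ := fun t ω => Z' 0 ω + ∑ s ∈ Finset.range t, e s ω * D s ω with hWdef
    have henn : ∀ s ω, 0 ≤ e s ω := by
      intro s ω; simp only [e]; split <;> norm_num
    have hele : ∀ s ω, e s ω ≤ 1 := by
      intro s ω; simp only [e]; split <;> norm_num
    have heme : ∀ s, Measurable[𝒜 s] (e s) := by
      intro s
      have hsum : Measurable[𝒜 s] fun ω => ∑ u ∈ Finset.range (s+1), ξ' u ω :=
        Finset.measurable_sum _ (fun i hi =>
          (hξ'ad i).mono (hmono (Nat.lt_succ_iff.mp (Finset.mem_range.mp hi))) le_rfl)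
      exact Measurable.ite (measurableSet_le hsum measurable_const)
        measurable_const measurable_const
    have hDint : ∀ s, Integrable (D s) μ := fun s =>
      ((((hZ'int (s+1)).sub (hZ'int s)).sub (hξ'int s)).add (hζ'int s))
    have heD_int : ∀ s, Integrable (fun ω => e s ω * D s ω) μ := fun s =>
      (hDint s).bdd_mul (((heme s).mono (hle s) le_rfl).aestronglyMeasurable)
        (c := 1) (ae_of_all μ fun ω => by rw [Real.norm_eq_abs, abs_of_nonneg (henn s ω)]; exact hele s ω)
    have hWint : ∀ t, Integrable (W t) μ := fun t =>
      (hZ'int 0).add (integrable_finset_sum _ (fun s _ => heD_int s))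
    have hWadp : StronglyAdapted ℱ W := by
      intro t
      apply Measurable.stronglyMeasurable
      apply Measurable.add ((hZ'ad 0).mono (hmono (Nat.zero_le t)) le_rfl)
      apply Finset.measurable_sum
      intro s hs
      have hst : s < t := Finset.mem_range.mp hs
      exact ((heme s).mono (hmono hst.le) le_rfl).mul
        (((((hZ'ad (s+1)).mono (hmono hst) le_rfl).sub
            ((hZ'ad s).mono (hmono hst.le) le_rfl)).sub
          ((hξ'ad s).mono (hmono hst.le) le_rfl)).add
          ((hζ'ad s).mono (hmono hst.le) le_rfl))
    have hWsuper : Supermartingale W ℱ μ := by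
      refine supermartingale_nat hWadp hWint (fun t => ?_)
      have hWsucc : W (t+1) = W t + fun ω => e t ω * D t ω := by
        funext ω; simp only [W, Finset.sum_range_succ, Pi.add_apply]; ring
      have h1 : μ[W (t+1)|𝒜 t] =ᵐ[μ] μ[W t|𝒜 t] + μ[fun ω => e t ω * D t ω|𝒜 t] := by
        rw [hWsucc]; exact condExp_add (hWint t) (heD_int t) _
      have h2 : μ[W t|𝒜 t] = W t :=
        condExp_of_stronglyMeasurable (hle t) (hWadp t) (hWint t)
      have h3 : μ[fun ω => e t ω * D t ω|𝒜 t] =ᵐ[μ] fun ω => e t ω * (μ[D t|𝒜 t]) ω := by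
        have := condExp_mul_of_stronglyMeasurable_left (m := 𝒜 t) (μ := μ)
          ((heme t).stronglyMeasurable) (by exact heD_int t) (hDint t)
        exact this
      have hg : Integrable (fun ω => Z' t ω + ξ' t ω - ζ' t ω) μ :=
        ((hZ'int t).add (hξ'int t)).sub (hζ'int t)
      have hgm : μ[fun ω => Z' t ω + ξ' t ω - ζ' t ω|𝒜 t] = fun ω => Z' t ω + ξ' t ω - ζ' t ω :=
        condExp_of_stronglyMeasurable (hle t)
          ((((hZ'ad t).add (hξ'ad t)).sub (hζ'ad t)).stronglyMeasurable) hg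
      have h4 : μ[D t|𝒜 t] =ᵐ[μ]
          fun ω => (μ[Z' (t+1)|𝒜 t]) ω - (Z' t ω + ξ' t ω - ζ' t ω) := by
        have hD : D t = fun ω => Z' (t+1) ω - (Z' t ω + ξ' t ω - ζ' t ω) := by
          funext ω; simp only [D]; ring
        rw [hD]
        have hsub := condExp_sub (m := 𝒜 t) (μ := μ) (hZ'int (t+1)) hg
        refine hsub.trans ?_
        rw [hgm]
        rfl
      filter_upwards [h1, h3, h4, hrec' t] with ω e1 e3 e4 e5
      have he1 : (μ[W (t+1)|𝒜 t]) ω = (μ[W t|𝒜 t]) ω + (μ[fun ω => e t ω * D t ω|𝒜 t]) ω := e1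
      have hDle : (μ[D t|𝒜 t]) ω ≤ 0 := by rw [e4]; linarith
      have : (μ[fun ω => e t ω * D t ω|𝒜 t]) ω ≤ 0 := by
        rw [e3]; exact mul_nonpos_of_nonneg_of_nonpos (henn t ω) hDle
      show (μ[W (t+1)|𝒜 t]) ω ≤ W t ω
      rw [he1, h2]
      linarith
    -- partial sums of truncated ξ' are bounded by a
    have hξ'mono : ∀ ω, Monotone fun t => ∑ u ∈ Finset.range t, ξ' u ω := fun ω =>
      monotone_nat_of_le_succ fun t => by
        rw [Finset.sum_range_succ]; linarith [hξ'nn t ω]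
    have hS_le : ∀ ω t, (∑ s ∈ Finset.range t, e s ω * ξ' s ω) ≤ (a:ℝ) := by
      intro ω t
      induction t with
      | zero => simpa using (Nat.cast_nonneg a : (0:ℝ) ≤ a)
      | succ t ih =>
        rw [Finset.sum_range_succ]
        by_cases h : (∑ u ∈ Finset.range (t+1), ξ' u ω) ≤ (a:ℝ)
        · have h1 : ∑ s ∈ Finset.range t, e s ω * ξ' s ω ≤ ∑ s ∈ Finset.range t, ξ' s ω :=
            Finset.sum_le_sum fun s _ => mul_le_of_le_one_left (hξ'nn s ω) (hele s ω)
          have h2 : e t ω * ξ' t ω ≤ ξ' t ω := mul_le_of_le_one_left (hξ'nn t ω) (hele t ω)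
          have h3 : (∑ s ∈ Finset.range t, ξ' s ω) + ξ' t ω
              = ∑ u ∈ Finset.range (t+1), ξ' u ω := (Finset.sum_range_succ _ _).symm
          linarith
        · have he0 : e t ω = 0 := if_neg h
          rw [he0, zero_mul, add_zero]; exact ih
    -- pointwise lower bound for W
    have hmain : ∀ ω t,
        0 ≤ W t ω + ∑ s ∈ Finset.range t, e s ω * ξ' s ω ∧
        ((∑ u ∈ Finset.range t, ξ' u ω) ≤ (a:ℝ) →
          Z' t ω ≤ W t ω + ∑ s ∈ Finset.range t, e s ω * ξ' s ω) := by
      intro ω t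
      induction t with
      | zero =>
        constructor
        · simpa [W] using hZ'nn 0 ω
        · intro _; simp [W]
      | succ t ih =>
        have hstep : W (t+1) ω + ∑ s ∈ Finset.range (t+1), e s ω * ξ' s ω
            = (W t ω + ∑ s ∈ Finset.range t, e s ω * ξ' s ω)
              + e t ω * (Z' (t+1) ω - Z' t ω + ζ' t ω) := by
          simp only [W, Finset.sum_range_succ, D]; ring
        by_cases h : (∑ u ∈ Finset.range (t+1), ξ' u ω) ≤ (a:ℝ)
        · have he1 : e t ω = 1 := if_pos h
          have hprev : (∑ u ∈ Finset.range t, ξ' u ω) ≤ (a:ℝ) :=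
            le_trans (hξ'mono ω (Nat.le_succ t)) h
          have hZle := ih.2 hprev
          constructor
          · rw [hstep, he1]
            have := hZ'nn (t+1) ω
            have := hζ'nn t ω
            linarith
          · intro _
            rw [hstep, he1]
            have := hζ'nn t ω
            linarith
        · have he0 : e t ω = 0 := if_neg h
          constructor
          · rw [hstep, he0]
            have := ih.1
            linarith
          · intro hcon; exact absurd hcon h
    have hWlb : ∀ ω t, -(a:ℝ) ≤ W t ω := fun ω t => by
      have h1 := (hmain ω t).1
      have h2 := hS_le ω t
      linarith
    -- L¹ boundedness
    have hWexp : ∀ t, ∫ ω, W t ω ∂μ ≤ ∫ ω, W 0 ω ∂μ := by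
      intro t
      have h := hWsuper.setIntegral_le (Nat.zero_le t) (MeasurableSet.univ)
      simpa [setIntegral_univ] using h
    set R : NNReal := ((∫ ω, W 0 ω ∂μ) + 2*(a:ℝ)).toNNReal with hRdef
    have hWbdd : ∀ t, eLpNorm (W t) 1 μ ≤ (R : ENNReal) := by
      intro t
      have h1 : eLpNorm (W t) 1 μ = ENNReal.ofReal (∫ ω, ‖W t ω‖ ∂μ) := by
        rw [eLpNorm_one_eq_lintegral_enorm, ← ofReal_integral_norm_eq_lintegral_enorm (hWint t)]
      rw [h1]
      have h2 : ∫ ω, ‖W t ω‖ ∂μ ≤ ∫ ω, (W t ω + 2*(a:ℝ)) ∂μ := by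
        refine integral_mono (hWint t).norm ((hWint t).add (integrable_const _)) (fun ω => ?_)
        have hlb := hWlb ω t
        have hca : (0:ℝ) ≤ (a:ℝ) := Nat.cast_nonneg a
        rw [Real.norm_eq_abs]
        rcases abs_cases (W t ω) with ⟨h,_⟩|⟨h,_⟩ <;> simp only [h] <;> linarith
      rw [integral_add (hWint t) (integrable_const _), integral_const, probReal_univ,
        one_smul] at h2
      have h3 : ∫ ω, ‖W t ω‖ ∂μ ≤ (∫ ω, W 0 ω ∂μ) + 2*(a:ℝ) := by
        linarith [hWexp t]
      exact le_trans (ENNReal.ofReal_le_ofReal h3) (le_of_eq rfl)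
    -- a.e. convergence of W
    have hWconv : ∀ᵐ ω ∂μ, ∃ c, Tendsto (fun t => W t ω) atTop (nhds c) := by
      have hsub : Submartingale (-W) ℱ μ := hWsuper.neg
      have hb : ∀ t, eLpNorm ((-W) t) 1 μ ≤ (R : ENNReal) := fun t => by
        have : (-W) t = -(W t) := rfl
        rw [this, eLpNorm_neg]
        exact hWbdd t
      filter_upwards [hsub.exists_ae_tendsto_of_bdd hb] with ω hc
      obtain ⟨c, hc⟩ := hc
      refine ⟨-c, ?_⟩
      have heq : (fun t => W t ω) = fun t => -((-W) t ω) := by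
        funext t; simp
      rw [heq]
      simpa using hc.neg
    -- conclude on the event where the partial sums of ξ' stay below a
    filter_upwards [hWconv] with ω hWc hbound
    obtain ⟨c, hc⟩ := hWc
    have he1 : ∀ s, e s ω = 1 := fun s => if_pos (hbound s)
    have hWeq : ∀ t, W t ω + ∑ s ∈ Finset.range t, ξ' s ω
        = Z' t ω + ∑ s ∈ Finset.range t, ζ' s ω := by
      intro t
      have h1 : ∑ s ∈ Finset.range t, e s ω * D s ω
          = ∑ s ∈ Finset.range t, ((Z' (s+1) ω - Z' s ω) + (ζ' s ω - ξ' s ω)) :=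
        Finset.sum_congr rfl fun s _ => by rw [he1 s]; simp only [D]; ring
      have h2 : ∑ s ∈ Finset.range t, ((Z' (s+1) ω - Z' s ω) + (ζ' s ω - ξ' s ω))
          = (Z' t ω - Z' 0 ω) + ∑ s ∈ Finset.range t, (ζ' s ω - ξ' s ω) := by
        rw [Finset.sum_add_distrib, Finset.sum_range_sub (fun s => Z' s ω)]
      have h3 : ∑ s ∈ Finset.range t, (ζ' s ω - ξ' s ω)
          = ∑ s ∈ Finset.range t, ζ' s ω - ∑ s ∈ Finset.range t, ξ' s ω :=
        Finset.sum_sub_distrib _ _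
      simp only [W]
      rw [h1, h2, h3]
      ring
    have hξ'sumω : Summable fun s => ξ' s ω :=
      summable_of_sum_range_le (fun s => hξ'nn s ω)
        (fun n => le_trans (hξ'mono ω (Nat.le_succ n)) (hbound n))
    have hsumξ : Tendsto (fun t => ∑ s ∈ Finset.range t, ξ' s ω) atTop
        (nhds (∑' s, ξ' s ω)) := hξ'sumω.hasSum.tendsto_sum_nat
    have hconv2 : Tendsto (fun t => Z' t ω + ∑ s ∈ Finset.range t, ζ' s ω) atTop
        (nhds (c + ∑' s, ξ' s ω)) := (hc.add hsumξ).congr hWeq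
    obtain ⟨M, hM⟩ := hconv2.bddAbove_range
    have hζ'sumω : Summable fun s => ζ' s ω := by
      refine summable_of_sum_range_le (c := M) (fun s => hζ'nn s ω) (fun n => ?_)
      have hMn : Z' n ω + ∑ s ∈ Finset.range n, ζ' s ω ≤ M := hM ⟨n, rfl⟩
      have := hZ'nn n ω
      linarith
    have hsumζ : Tendsto (fun t => ∑ s ∈ Finset.range t, ζ' s ω) atTop
        (nhds (∑' s, ζ' s ω)) := hζ'sumω.hasSum.tendsto_sum_nat
    refine ⟨⟨c + ∑' s, ξ' s ω - ∑' s, ζ' s ω, ?_⟩, hζ'sumω⟩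
    have := hconv2.sub hsumζ
    exact this.congr (fun t => by ring)
  -- combining over a
  have hξ'sum : ∀ᵐ ω ∂μ, Summable fun t => ξ' t ω := by
    filter_upwards [hξsum] with ω h
    refine Summable.of_nonneg_of_le (fun t => hξ'nn t ω) (fun t => ?_) h
    calc ξ' t ω = (P (t+1) ω)⁻¹ * ξ t ω := rfl
      _ ≤ 1 * ξ t ω := mul_le_mul_of_nonneg_right (hinvle (t+1) ω) (hξnn t ω)
      _ = ξ t ω := one_mul _
  have hcomb : ∀ᵐ ω ∂μ,
      (∃ L, Tendsto (fun t => Z' t ω) atTop (nhds L)) ∧ Summable fun t => ζ' t ω := by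
    have hkey := ae_all_iff.2 key
    filter_upwards [hkey, hξ'sum] with ω hk hs
    obtain ⟨n, hn⟩ := exists_nat_ge (∑' t, ξ' t ω)
    exact hk n (fun t => le_trans (Summable.sum_le_tsum _ (fun i _ => hξ'nn i ω) hs) hn)
  -- undoing the normalization
  filter_upwards [hcomb, hβsum] with ω hω hβω
  obtain ⟨⟨L, hL⟩, hζ'ω⟩ := hω
  set C : ℝ := Real.exp (∑' t, β t ω) with hCdef
  have hsumβle : ∀ t, ∑ s ∈ Finset.range t, β s ω ≤ ∑' s, β s ω := fun t =>
    Summable.sum_le_tsum _ (fun i _ => hβnn i ω) hβω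
  have hPle : ∀ t, P t ω ≤ C := by
    intro t
    calc P t ω ≤ ∏ s ∈ Finset.range t, Real.exp (β s ω) :=
        Finset.prod_le_prod (fun s _ => by linarith [hβnn s ω])
          (fun s _ => by rw [add_comm]; exact Real.add_one_le_exp (β s ω))
      _ = Real.exp (∑ s ∈ Finset.range t, β s ω) := (Real.exp_sum _ _).symm
      _ ≤ C := Real.exp_le_exp.2 (hsumβle t)
  have hPtendQ : Tendsto (fun t => P t ω) atTop (nhds (⨆ t, P t ω)) :=
    tendsto_atTop_ciSup (hPmono ω) ⟨C, fun x ⟨t, ht⟩ => ht ▸ hPle t⟩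
  constructor
  · refine ⟨(⨆ t, P t ω) * L, ?_⟩
    have h1 : Tendsto (fun t => P t ω * Z' t ω) atTop
        (nhds ((⨆ t, P t ω) * L)) := hPtendQ.mul hL
    refine h1.congr (fun t => ?_)
    show P t ω * ((P t ω)⁻¹ * Z t ω) = Z t ω
    rw [← mul_assoc, mul_inv_cancel₀ (hPpos t ω).ne', one_mul]
  · refine Summable.of_nonneg_of_le (fun t => hζnn t ω) (fun t => ?_) (hζ'ω.mul_left C)
    show ζ t ω ≤ C * ((P (t+1) ω)⁻¹ * ζ t ω)
    have hone : (1:ℝ) ≤ C * (P (t+1) ω)⁻¹ := by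
      calc (1:ℝ) = P (t+1) ω * (P (t+1) ω)⁻¹ := (mul_inv_cancel₀ (hPpos (t+1) ω).ne').symm
        _ ≤ C * (P (t+1) ω)⁻¹ := mul_le_mul_of_nonneg_right (hPle (t+1)) (hinvnn (t+1) ω)
    calc ζ t ω = 1 * ζ t ω := (one_mul _).symm
      _ ≤ (C * (P (t+1) ω)⁻¹) * ζ t ω := mul_le_mul_of_nonneg_right hone (hζnn t ω)
      _ = C * ((P (t+1) ω)⁻¹ * ζ t ω) := mul_assoc _ _ _
end

section
/- Suppose (Z_t) is a sequence of nonnegative reals converging to some limit L, R : ℝ^q → ℝ^q is continuous, Z_t = ‖θ_t − θ*‖², and (θ − θ*)ᵀ R(θ) = 0 iff θ = θ*, with (θ − θ*)ᵀ R(θ) ≥ c(δ) > 0 whenever δ ≤ ‖θ − θ*‖ ≤ 1/δ for each δ > 0. If lim inf_t (θ_t − θ*)ᵀ R(θ_t) = 0, then L = 0. -/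
/-!
If the distances `‖θₜ - θ*‖` converged to some `s > 0`, the iterates would eventually lie in an
annulus `δ ≤ ‖θ - θ*‖ ≤ 1/δ`, where the drift is at least `c δ > 0`. The iterates also stay in a
compact ball, on which the continuous drift is bounded, so its `liminf` is a genuine limit inferior
and is at least `c δ`, contradicting `liminf = 0`.
-/

open Filter Topology

lemma exists_pos_eventually_le_le_inv_of_tendsto {ι : Type*} {l : Filter ι} {v : ι → ℝ} {s : ℝ}
    (hv : Tendsto v l (𝓝 s)) (hs : 0 < s) :
    ∃ δ > 0, ∀ᶠ t in l, δ ≤ v t ∧ v t ≤ 1 / δ := by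
  refine ⟨min (s / 2) (1 / (2 * s)), by positivity, ?_⟩
  have h2s : 2 * s ≤ 1 / min (s / 2) (1 / (2 * s)) := by
    rw [le_one_div (by positivity) (by positivity)]
    exact min_le_right _ _
  filter_upwards [hv.eventually (eventually_ge_nhds (half_lt_self hs)),
    hv.eventually (eventually_le_nhds (lt_two_mul_self hs))] with t hlow hhigh
  exact ⟨(min_le_left _ _).trans hlow, hhigh.trans h2s⟩

lemma IsCompact.isBoundedUnder_le_comp {X ι : Type*} [TopologicalSpace X] {K : Set X}
    (hK : IsCompact K) {g : X → ℝ} (hg : ContinuousOn g K) {u : ι → X} {l : Filter ι}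
    (hu : ∀ᶠ t in l, u t ∈ K) : IsBoundedUnder (· ≤ ·) l (g ∘ u) := by
  obtain ⟨M, hM⟩ := hK.bddAbove_image hg
  exact isBoundedUnder_of_eventually_le (a := M) <| hu.mono fun t ht => hM ⟨u t, ht, rfl⟩

theorem eq_zero_of_tendsto_dist_of_liminf_eq_zero {X ι : Type*} [PseudoMetricSpace X]
    [ProperSpace X] {f : X → ℝ} (hf : Continuous f) {x₀ : X} {c : ℝ → ℝ}
    (hc : ∀ δ : ℝ, 0 < δ → 0 < c δ ∧ ∀ x, δ ≤ dist x x₀ → dist x x₀ ≤ 1 / δ → c δ ≤ f x)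
    {l : Filter ι} [l.NeBot] {u : ι → X} {s : ℝ} (hu : Tendsto (fun t => dist (u t) x₀) l (𝓝 s))
    (hliminf : liminf (f ∘ u) l = 0) : s = 0 := by
  have hs : 0 ≤ s := ge_of_tendsto' hu fun t => dist_nonneg
  by_contra hs0
  obtain ⟨δ, hδ, hann⟩ := exists_pos_eventually_le_le_inv_of_tendsto hu (hs.lt_of_ne' hs0)
  obtain ⟨hcδ, hcbd⟩ := hc δ hδ
  have hball : ∀ᶠ t in l, u t ∈ Metric.closedBall x₀ (1 / δ) :=
    hann.mono fun t ht => ht.2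
  have hbdd := (isCompact_closedBall x₀ (1 / δ)).isBoundedUnder_le_comp hf.continuousOn hball
  have hge : c δ ≤ liminf (f ∘ u) l :=
    le_liminf_of_le hbdd.isCoboundedUnder_ge (hann.mono fun t ht => hcbd _ ht.1 ht.2)
  linarith

theorem limit_zero_of_liminf_drift_zero_general
    {q : ℕ} (R : EuclideanSpace ℝ (Fin q) → EuclideanSpace ℝ (Fin q))
    (hR : Continuous R)
    (θseq : ℕ → EuclideanSpace ℝ (Fin q)) (θstar : EuclideanSpace ℝ (Fin q)) (L : ℝ)
    (hZ : Tendsto (fun t => ‖θseq t - θstar‖ ^ 2) atTop (nhds L))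
    (c : ℝ → ℝ)
    (hc : ∀ δ : ℝ, 0 < δ → 0 < c δ ∧
      ∀ θ, δ ≤ ‖θ - θstar‖ → ‖θ - θstar‖ ≤ 1 / δ →
        c δ ≤ (inner ℝ (θ - θstar) (R θ) : ℝ))
    (hliminf : liminf (fun t => (inner ℝ (θseq t - θstar) (R (θseq t)) : ℝ)) atTop = 0) :
    L = 0 := by
  have hL : 0 ≤ L := ge_of_tendsto' hZ fun t => sq_nonneg _
  have hdist : Tendsto (fun t => dist (θseq t) θstar) atTop (𝓝 √L) := by
    simpa only [Real.sqrt_sq (norm_nonneg _), dist_eq_norm] using hZ.sqrt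
  have hsqrt : √L = 0 :=
    eq_zero_of_tendsto_dist_of_liminf_eq_zero
      (f := fun θ => (inner ℝ (θ - θstar) (R θ) : ℝ))
      ((continuous_id.sub continuous_const).inner hR)
      (by simpa only [dist_eq_norm] using hc) hdist hliminf
  exact le_antisymm (Real.sqrt_eq_zero'.mp hsqrt) hL

/-- Final step of the Robbins–Monro argument: if the squared distances converge and the
drift vanishes along a subsequence, the limit of the squared distances is zero. -/
theorem limit_zero_of_liminf_drift_zero
    {q : ℕ} (R : EuclideanSpace ℝ (Fin q) → EuclideanSpace ℝ (Fin q))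
    (hR : Continuous R)
    (θseq : ℕ → EuclideanSpace ℝ (Fin q)) (θstar : EuclideanSpace ℝ (Fin q)) (L : ℝ)
    (hZ : Tendsto (fun t => ‖θseq t - θstar‖ ^ 2) atTop (nhds L))
    (hdrift_eq : ∀ θ, (inner ℝ (θ - θstar) (R θ) : ℝ) = 0 ↔ θ = θstar)
    (c : ℝ → ℝ)
    (hc : ∀ δ : ℝ, 0 < δ → 0 < c δ ∧
      ∀ θ, δ ≤ ‖θ - θstar‖ → ‖θ - θstar‖ ≤ 1 / δ →
        c δ ≤ (inner ℝ (θ - θstar) (R θ) : ℝ))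
    (hliminf : liminf (fun t => (inner ℝ (θseq t - θstar) (R (θseq t)) : ℝ)) atTop = 0) :
    L = 0 :=
  limit_zero_of_liminf_drift_zero_general R hR θseq θstar L hZ c hc hliminf
end
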